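/- Let f : ℝⁿ → ℝ be differentiable, x ∈ Ω, x̄ ∈ ℝⁿ with x ≠ x̄, μ̄ > 0, b₁ > 0, σ ∈ (0,1/2), and let G ∈ ℝ^{n×n} be symmetric with G ⪰ b₁‖μ̄(x − x̄)‖^σ I. Define Θ(y) := f(x) + ⟨∇f(x), y − x⟩ + (1/2)⟨y − x, G(y − x)⟩ + δ_{Π(x)}(y). If y ∈ ℝⁿ satisfies Θ(y) ≤ Θ(x), then y ∈ Π(x) and, with d := y − x: (a) ⟨∇f(x), d⟩ ≤ −(1/2)⟨d, Gd⟩ ≤ −(b₁/2)‖μ̄(x − x̄)‖^σ‖d‖², with strict inequality ⟨∇f(x), d⟩ < 0 whenever d ≠ 0; (b) g(x + αd) ≤ g(x) for every α ∈ (0,1]. -/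

import Mathlib

/-!
Since `x ∈ Ω`, `Θ(x) = f(x)` is finite, so `Θ(y) ≤ Θ(x)` forces `y ∈ Π(x)` together with the
model decrease `⟨∇f(x), d⟩ + ½⟨d, Gd⟩ ≤ 0`; the lower bound on `G` turns this into (a).
For (b), `Π(x)` is convex and contains `x`, so `x + αd ∈ Π(x)`, and on `Π(x)` both supports
can only shrink, whence `g ≤ g(x)` there.
-/

open scoped Classical

noncomputable section

/-- The box `Ω = {x : l ≤ x ≤ u}` in ℝⁿ. -/
def Om {n : ℕ} (l u : Fin n → ℝ) : Set (EuclideanSpace ℝ (Fin n)) :=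
  {x | ∀ i, l i ≤ x i ∧ x i ≤ u i}

/-- The ℓ₀-norm (number of nonzero entries) of a vector. -/
def zeroNorm {m : ℕ} (v : Fin m → ℝ) : ℕ := (Function.support v).ncard

/-- `g(x) = λ₁‖Bx‖₀ + λ₂‖x‖₀ + δ_Ω(x)` as an extended-real-valued function. -/
def gfun {n p : ℕ} (B : Matrix (Fin p) (Fin n) ℝ) (lam1 lam2 : ℝ) (l u : Fin n → ℝ)
    (x : EuclideanSpace ℝ (Fin n)) : EReal :=
  if x ∈ Om l u then
    ((lam1 * (zeroNorm (B.mulVec x) : ℝ) + lam2 * (zeroNorm x : ℝ) : ℝ) : EReal)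
  else ⊤

/-- `Π(z) = {x ∈ Ω : supp(x) ⊆ supp(z), supp(Bx) ⊆ supp(Bz)}`. -/
def PiSet {n p : ℕ} (B : Matrix (Fin p) (Fin n) ℝ) (l u : Fin n → ℝ)
    (z : EuclideanSpace ℝ (Fin n)) : Set (EuclideanSpace ℝ (Fin n)) :=
  {x | x ∈ Om l u ∧ Function.support x ⊆ Function.support z ∧
    Function.support (B.mulVec x) ⊆ Function.support (B.mulVec z)}

/-- `Θ(y) = f(x) + ⟨∇f(x), y−x⟩ + (1/2)⟨y−x, G(y−x)⟩ + δ_{Π(x)}(y)`. -/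
def ThetaFun {n p : ℕ} (B : Matrix (Fin p) (Fin n) ℝ) (l u : Fin n → ℝ)
    (f : EuclideanSpace ℝ (Fin n) → ℝ) (G : Matrix (Fin n) (Fin n) ℝ)
    (x y : EuclideanSpace ℝ (Fin n)) : EReal :=
  if y ∈ PiSet B l u x then
    ((f x + (inner ℝ (gradient f x) (y - x) : ℝ)
      + (1 : ℝ) / 2 * (inner ℝ (y - x) ((WithLp.toLp 2 (G.mulVec (y - x)) : EuclideanSpace ℝ (Fin n))) : ℝ) : ℝ)
      : EReal)
  else ⊤

theorem Matrix.PosSemidef.mul_norm_sq_le_inner_mulVec {ι : Type*} [Fintype ι] [DecidableEq ι]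
    {G : Matrix ι ι ℝ} {c : ℝ} (hG : (G - c • (1 : Matrix ι ι ℝ)).PosSemidef)
    (d : EuclideanSpace ℝ ι) :
    c * ‖d‖ ^ 2 ≤ inner ℝ d (WithLp.toLp 2 (G.mulVec d) : EuclideanSpace ℝ ι) := by
  have h := hG.dotProduct_mulVec_nonneg d
  rw [Matrix.sub_mulVec, Matrix.smul_mulVec, Matrix.one_mulVec, dotProduct_sub,
    dotProduct_smul, smul_eq_mul, sub_nonneg] at h
  rw [← real_inner_self_eq_norm_sq, EuclideanSpace.inner_eq_star_dotProduct,
    EuclideanSpace.inner_eq_star_dotProduct, dotProduct_comm]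
  simpa [dotProduct_comm] using h

theorem convex_Om {n : ℕ} (l u : Fin n → ℝ) : Convex ℝ (Om l u) := by
  intro x hx y hy a b ha hb hab i
  have hl : l i = a * l i + b * l i := by rw [← add_mul, hab, one_mul]
  have hu : u i = a * u i + b * u i := by rw [← add_mul, hab, one_mul]
  simp only [PiLp.add_apply, PiLp.smul_apply, smul_eq_mul]
  constructor
  · rw [hl]
    gcongr
    exacts [(hx i).1, (hy i).1]
  · rw [hu]
    gcongr
    exacts [(hx i).2, (hy i).2]

theorem Function.support_smul_add_smul_subset {α R M : Type*} [AddZeroClass M]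
    [SMulZeroClass R M] {v w s : α → M}
    (hv : Function.support v ⊆ s.support) (hw : Function.support w ⊆ s.support) (a b : R) :
    Function.support (a • v + b • w) ⊆ s.support :=
  (Function.support_add _ _).trans <| Set.union_subset
    ((Function.support_const_smul_subset a v).trans hv)
    ((Function.support_const_smul_subset b w).trans hw)

theorem convex_PiSet {n p : ℕ} (B : Matrix (Fin p) (Fin n) ℝ) (l u : Fin n → ℝ)
    (z : EuclideanSpace ℝ (Fin n)) : Convex ℝ (PiSet B l u z) := by
  rintro x ⟨hxΩ, hx, hBx⟩ y ⟨hyΩ, hy, hBy⟩ a b ha hb hab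
  refine ⟨convex_Om l u hxΩ hyΩ ha hb hab, ?_, ?_⟩
  · exact Function.support_smul_add_smul_subset hx hy a b
  · simpa [Matrix.mulVec_add, Matrix.mulVec_smul] using
      Function.support_smul_add_smul_subset hBx hBy a b

theorem self_mem_PiSet {n p : ℕ} (B : Matrix (Fin p) (Fin n) ℝ) {l u : Fin n → ℝ}
    {x : EuclideanSpace ℝ (Fin n)} (hx : x ∈ Om l u) : x ∈ PiSet B l u x :=
  ⟨hx, subset_rfl, subset_rfl⟩

theorem gfun_le_of_mem_PiSet {n p : ℕ} (B : Matrix (Fin p) (Fin n) ℝ) {lam1 lam2 : ℝ}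
    (hlam1 : 0 ≤ lam1) (hlam2 : 0 ≤ lam2) {l u : Fin n → ℝ} {w z : EuclideanSpace ℝ (Fin n)}
    (hw : w ∈ PiSet B l u z) : gfun B lam1 lam2 l u w ≤ gfun B lam1 lam2 l u z := by
  obtain ⟨hwΩ, hsupp, hBsupp⟩ := hw
  unfold gfun
  rw [if_pos hwΩ]
  split_ifs with hz
  · rw [EReal.coe_le_coe_iff]
    have hB : (zeroNorm (B.mulVec w) : ℝ) ≤ zeroNorm (B.mulVec z) :=
      Nat.cast_le.mpr (Set.ncard_le_ncard hBsupp (Set.toFinite _))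
    have h : (zeroNorm w : ℝ) ≤ zeroNorm z :=
      Nat.cast_le.mpr (Set.ncard_le_ncard hsupp (Set.toFinite _))
    gcongr
  · exact le_top

theorem ThetaFun_self {n p : ℕ} (B : Matrix (Fin p) (Fin n) ℝ) {l u : Fin n → ℝ}
    (f : EuclideanSpace ℝ (Fin n) → ℝ) (G : Matrix (Fin n) (Fin n) ℝ)
    {x : EuclideanSpace ℝ (Fin n)} (hx : x ∈ Om l u) : ThetaFun B l u f G x x = f x := by
  simp [ThetaFun, self_mem_PiSet B hx]

theorem mem_PiSet_and_le_of_ThetaFun_le {n p : ℕ} (B : Matrix (Fin p) (Fin n) ℝ)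
    {l u : Fin n → ℝ} (f : EuclideanSpace ℝ (Fin n) → ℝ) (G : Matrix (Fin n) (Fin n) ℝ)
    {x y : EuclideanSpace ℝ (Fin n)} (hx : x ∈ Om l u)
    (hy : ThetaFun B l u f G x y ≤ ThetaFun B l u f G x x) :
    y ∈ PiSet B l u x ∧ inner ℝ (gradient f x) (y - x) ≤
      -(1 / 2) * inner ℝ (y - x) (WithLp.toLp 2 (G.mulVec (y - x)) : EuclideanSpace ℝ (Fin n)) := by
  rw [ThetaFun_self B f G hx] at hy
  by_cases hyPi : y ∈ PiSet B l u x
  · rw [ThetaFun, if_pos hyPi, EReal.coe_le_coe_iff] at hy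
    exact ⟨hyPi, by linarith⟩
  · rw [ThetaFun, if_neg hyPi, top_le_iff] at hy
    exact absurd hy (EReal.coe_ne_top _)

theorem stmt9_general {n p : ℕ} (B : Matrix (Fin p) (Fin n) ℝ) (lam1 lam2 : ℝ)
    (hlam1 : 0 < lam1) (hlam2 : 0 < lam2)
    (l u : Fin n → ℝ)
    (f : EuclideanSpace ℝ (Fin n) → ℝ)
    (x : EuclideanSpace ℝ (Fin n)) (hx : x ∈ Om l u)
    (xbar : EuclideanSpace ℝ (Fin n)) (hne : x ≠ xbar)
    (mubar b1 σ : ℝ) (hmubar : 0 < mubar) (hb1 : 0 < b1)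
    (G : Matrix (Fin n) (Fin n) ℝ)
    (hG : (G - (b1 * ‖mubar • (x - xbar)‖ ^ σ) • (1 : Matrix (Fin n) (Fin n) ℝ)).PosSemidef)
    (y : EuclideanSpace ℝ (Fin n))
    (hy : ThetaFun B l u f G x y ≤ ThetaFun B l u f G x x) :
    y ∈ PiSet B l u x ∧
    (inner ℝ (gradient f x) (y - x) : ℝ) ≤
      -((1 : ℝ) / 2) * (inner ℝ (y - x) ((WithLp.toLp 2 (G.mulVec (y - x)) : EuclideanSpace ℝ (Fin n))) : ℝ) ∧
    -((1 : ℝ) / 2) * (inner ℝ (y - x) ((WithLp.toLp 2 (G.mulVec (y - x)) : EuclideanSpace ℝ (Fin n))) : ℝ) ≤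
      -(b1 / 2) * ‖mubar • (x - xbar)‖ ^ σ * ‖y - x‖ ^ 2 ∧
    (y - x ≠ 0 → (inner ℝ (gradient f x) (y - x) : ℝ) < 0) ∧
    (∀ α : ℝ, 0 < α → α ≤ 1 →
      gfun B lam1 lam2 l u (x + α • (y - x)) ≤ gfun B lam1 lam2 l u x) := by
  obtain ⟨hyPi, hdescent⟩ := mem_PiSet_and_le_of_ThetaFun_le B f G hx hy
  have hquad : b1 * ‖mubar • (x - xbar)‖ ^ σ * ‖y - x‖ ^ 2 ≤
      inner ℝ (y - x) (WithLp.toLp 2 (G.mulVec (y - x)) : EuclideanSpace ℝ (Fin n)) :=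
    hG.mul_norm_sq_le_inner_mulVec (y - x)
  have hc : 0 < b1 * ‖mubar • (x - xbar)‖ ^ σ := by
    have : mubar • (x - xbar) ≠ 0 := smul_ne_zero hmubar.ne' (sub_ne_zero.mpr hne)
    positivity
  refine ⟨hyPi, hdescent, by linarith, fun hd => ?_, fun α hα0 hα1 => ?_⟩
  · have : 0 < b1 * ‖mubar • (x - xbar)‖ ^ σ * ‖y - x‖ ^ 2 := by positivity
    linarith
  · exact gfun_le_of_mem_PiSet B hlam1.le hlam2.le <|
      (convex_PiSet B l u x).add_smul_sub_mem (self_mem_PiSet B hx) hyPi ⟨hα0.le, hα1⟩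

/-- if `Θ(y) ≤ Θ(x)` then `y ∈ Π(x)` and, with `d = y − x`:
(a) `⟨∇f(x), d⟩ ≤ −(1/2)⟨d, Gd⟩ ≤ −(b₁/2)‖μ̄(x−x̄)‖^σ ‖d‖²`, strictly negative when `d ≠ 0`;
(b) `g(x + αd) ≤ g(x)` for every `α ∈ (0,1]`. -/
theorem stmt9 {n p : ℕ} (B : Matrix (Fin p) (Fin n) ℝ) (lam1 lam2 : ℝ)
    (hlam1 : 0 < lam1) (hlam2 : 0 < lam2)
    (l u : Fin n → ℝ) (hl : ∀ i, l i ≤ 0) (hu : ∀ i, 0 ≤ u i)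
    (f : EuclideanSpace ℝ (Fin n) → ℝ) (hf : Differentiable ℝ f)
    (x : EuclideanSpace ℝ (Fin n)) (hx : x ∈ Om l u)
    (xbar : EuclideanSpace ℝ (Fin n)) (hne : x ≠ xbar)
    (mubar b1 σ : ℝ) (hmubar : 0 < mubar) (hb1 : 0 < b1) (hσ : 0 < σ ∧ σ < 1 / 2)
    (G : Matrix (Fin n) (Fin n) ℝ) (hGsym : G.IsSymm)
    (hG : (G - (b1 * ‖mubar • (x - xbar)‖ ^ σ) • (1 : Matrix (Fin n) (Fin n) ℝ)).PosSemidef)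
    (y : EuclideanSpace ℝ (Fin n))
    (hy : ThetaFun B l u f G x y ≤ ThetaFun B l u f G x x) :
    y ∈ PiSet B l u x ∧
    (inner ℝ (gradient f x) (y - x) : ℝ) ≤
      -((1 : ℝ) / 2) * (inner ℝ (y - x) ((WithLp.toLp 2 (G.mulVec (y - x)) : EuclideanSpace ℝ (Fin n))) : ℝ) ∧
    -((1 : ℝ) / 2) * (inner ℝ (y - x) ((WithLp.toLp 2 (G.mulVec (y - x)) : EuclideanSpace ℝ (Fin n))) : ℝ) ≤
      -(b1 / 2) * ‖mubar • (x - xbar)‖ ^ σ * ‖y - x‖ ^ 2 ∧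
    (y - x ≠ 0 → (inner ℝ (gradient f x) (y - x) : ℝ) < 0) ∧
    (∀ α : ℝ, 0 < α → α ≤ 1 →
      gfun B lam1 lam2 l u (x + α • (y - x)) ≤ gfun B lam1 lam2 l u x) :=
  stmt9_general B lam1 lam2 hlam1 hlam2 l u f x hx xbar hne mubar b1 σ hmubar hb1 G hG y hy

end
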